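/- arXiv:2005.02438 — 3 statements merged into one kernel-verified Lean document; each statement's English description precedes it below -/
import Mathlib

section
/- For every r ∈ ℂ⁴ with f_r = u²·u′ for independent linear forms u, u′, the stabilizer {h ∈ GL₂(ℂ) : h·r = r} is conjugate in GL₂(ℂ) to the subgroup {[[a,0],[0,1]] : a ∈ ℂ, a ≠ 0}. In particular, the stabilizer of c₂ = (0,1,0,0) (so f_{c₂} = −3y²x) is exactly the set {[[a,0],[0,1]] : a ≠ 0}. -/
noncomputable section

open Matrix

/-- The binary cubic form `f_r(x,y) = r₀y³ − 3r₁y²x − 3r₂yx² − r₃x³` attached to `r ∈ ℂ⁴`. -/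
def fcub (r : Fin 4 → ℂ) (x y : ℂ) : ℂ :=
  r 0 * y ^ 3 - 3 * r 1 * y ^ 2 * x - 3 * r 2 * y * x ^ 2 - r 3 * x ^ 3

/-- The 4×4 matrix `M(h)` for `h = [[a,b],[c,d]]`. -/
def Mmat (a b c d : ℂ) : Matrix (Fin 4) (Fin 4) ℂ :=
  !![d ^ 3, -3 * c * d ^ 2, -3 * c ^ 2 * d, -c ^ 3;
     -b * d ^ 2, d * (a * d + 2 * b * c), c * (2 * a * d + b * c), a * c ^ 2;
     -b ^ 2 * d, b * (2 * a * d + b * c), a * (a * d + 2 * b * c), a ^ 2 * c;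
     -b ^ 3, 3 * a * b ^ 2, 3 * a ^ 2 * b, a ^ 3]

/-- The action `h·r := (ad−bc)⁻¹ · M(h) · r` of `GL₂(ℂ)` on `ℂ⁴`. -/
def act (a b c d : ℂ) (r : Fin 4 → ℂ) : Fin 4 → ℂ :=
  (a * d - b * c)⁻¹ • (Mmat a b c d).mulVec r

/-- Matrix form of `Mmat`. -/
def MmatM (h : Matrix (Fin 2) (Fin 2) ℂ) : Matrix (Fin 4) (Fin 4) ℂ :=
  Mmat (h 0 0) (h 0 1) (h 1 0) (h 1 1)

/-- Matrix form of the action. -/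
def actM (h : Matrix (Fin 2) (Fin 2) ℂ) (r : Fin 4 → ℂ) : Fin 4 → ℂ :=
  act (h 0 0) (h 0 1) (h 1 0) (h 1 1) r

/-- Matrix of the dual action: the coefficients of
`(ad−bc)² · f_{h·*s}(x,y) = f_s(dx−by, ay−cx)`. -/
def Mdual (a b c d : ℂ) : Matrix (Fin 4) (Fin 4) ℂ :=
  !![a ^ 3, 3 * a ^ 2 * b, -3 * a * b ^ 2, b ^ 3;
     a ^ 2 * c, a ^ 2 * d + 2 * a * b * c, -(2 * a * b * d + b ^ 2 * c), b ^ 2 * d;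
     -a * c ^ 2, -(2 * a * c * d + b * c ^ 2), a * d ^ 2 + 2 * b * c * d, -b * d ^ 2;
     c ^ 3, 3 * c ^ 2 * d, -3 * c * d ^ 2, d ^ 3]

/-- The dual action `h·*s`: the unique vector satisfying
`fcub (dualAct a b c d s) x y = ((a*d−b*c)²)⁻¹ * fcub s (d*x−b*y) (a*y−c*x)`. -/
def dualAct (a b c d : ℂ) (s : Fin 4 → ℂ) : Fin 4 → ℂ :=
  ((a * d - b * c) ^ 2)⁻¹ • (Mdual a b c d).mulVec s

/-- Matrix form of the dual action. -/
def dualActM (h : Matrix (Fin 2) (Fin 2) ℂ) (s : Fin 4 → ℂ) : Fin 4 → ℂ :=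
  dualAct (h 0 0) (h 0 1) (h 1 0) (h 1 1) s

/-- The linear form `u₁y − u₂x` attached to `u = (u₁,u₂) ∈ ℂ²`. -/
def linForm (u : ℂ × ℂ) (x y : ℂ) : ℂ := u.1 * y - u.2 * x

/-- Two linear forms are independent if `u₁u₂′ − u₂u₁′ ≠ 0`. -/
def indepLF (u v : ℂ × ℂ) : Prop := u.1 * v.2 - u.2 * v.1 ≠ 0

/-- `d₀(r) = −9(r₀r₂ + r₁²)`. -/
def dd0 (r : Fin 4 → ℂ) : ℂ := -9 * (r 0 * r 2 + r 1 ^ 2)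

/-- `d₁(r) = −9(r₀r₃ + r₁r₂)`. -/
def dd1 (r : Fin 4 → ℂ) : ℂ := -9 * (r 0 * r 3 + r 1 * r 2)

/-- `d₂(r) = 9(r₁r₃ − r₂²)`. -/
def dd2 (r : Fin 4 → ℂ) : ℂ := 9 * (r 1 * r 3 - r 2 ^ 2)

/-- The quadratic form `Δ_r(x,y) = d₀(r)y² + d₁(r)xy + d₂(r)x²`. -/
def Δform (r : Fin 4 → ℂ) (x y : ℂ) : ℂ := dd0 r * y ^ 2 + dd1 r * x * y + dd2 r * x ^ 2

/-- The discriminant `D_r = d₁(r)² − 4d₀(r)d₂(r)`. -/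
def Ddisc (r : Fin 4 → ℂ) : ℂ := dd1 r ^ 2 - 4 * dd0 r * dd2 r

/-- The pairing `⟨r,s⟩ = r₀s₀ + 3r₁s₁ + 3r₂s₂ + r₃s₃`. -/
def pairK (r s : Fin 4 → ℂ) : ℂ := r 0 * s 0 + 3 * r 1 * s 1 + 3 * r 2 * s 2 + r 3 * s 3

/-- The Hessian matrix of `f_r` evaluated at `(x,y)`. -/
def HessM (r : Fin 4 → ℂ) (x y : ℂ) : Matrix (Fin 2) (Fin 2) ℂ :=
  !![6 * r 0 * y - 6 * r 1 * x, -6 * r 1 * y - 6 * r 2 * x;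
     -6 * r 1 * y - 6 * r 2 * x, -6 * r 2 * y - 6 * r 3 * x]

/-- The moment map `[r,s]`. -/
def momentMap (r s : Fin 4 → ℂ) : Matrix (Fin 2) (Fin 2) ℂ :=
  !![r 0 * s 0 + 2 * r 1 * s 1 + r 2 * s 2, -(r 1 * s 0) + 2 * r 2 * s 1 + r 3 * s 2;
     -(r 0 * s 1) + 2 * r 1 * s 2 + r 2 * s 3, r 1 * s 1 + 2 * r 2 * s 2 + r 3 * s 3]

/-!
The action is the twisted substitution action on binary cubics:
`f_{h·r}(x,y) = (det h)⁻¹ f_r(ax+cy, bx+dy)`, and `r ↦ f_r` is injective. So the action is a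
group action, and a form `u²u'` with `u, u'` independent is obtained from `f_{c₂} = −3y²x` by the
substitution sending `y ↦ u` and `x ↦ u'` up to scaling, i.e. `r = g·c₂` for an invertible `g`.
Stabilizers of points in one orbit are conjugate, and the stabilizer of `c₂` is computed by hand.
-/

lemma fcub_injective : Function.Injective fcub := by
  intro r s h
  have e (x y : ℂ) : fcub r x y = fcub s x y := congrFun (congrFun h x) y
  have e01 := e 0 1
  have e10 := e 1 0
  have e11 := e 1 1
  have e21 := e (-1) 1
  simp only [fcub] at e01 e10 e11 e21
  have h0 : r 0 = s 0 := by linear_combination e01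
  have h1 : r 1 = s 1 := by linear_combination (e21 - e11) / 6 + e10 / 3
  have h2 : r 2 = s 2 := by linear_combination e01 / 3 - (e11 + e21) / 6
  have h3 : r 3 = s 3 := by linear_combination -e10
  funext i
  fin_cases i <;> assumption

lemma fcub_smul (k : ℂ) (r : Fin 4 → ℂ) (x y : ℂ) : fcub (k • r) x y = k * fcub r x y := by
  simp only [fcub, Pi.smul_apply, smul_eq_mul]
  ring

lemma fcub_Mmat_mulVec (a b c d : ℂ) (r : Fin 4 → ℂ) (x y : ℂ) :
    fcub (Mmat a b c d *ᵥ r) x y = fcub r (a * x + c * y) (b * x + d * y) := by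
  simp only [fcub, mulVec, dotProduct, Mmat, of_apply, cons_val', cons_val_fin_one,
    cons_val_zero, Fin.sum_univ_four, cons_val_one, cons_val]
  ring

lemma fcub_c2 (x y : ℂ) : fcub ![0, 1, 0, 0] x y = -3 * y ^ 2 * x := by
  simp [fcub]

lemma fcub_actM (h : Matrix (Fin 2) (Fin 2) ℂ) (r : Fin 4 → ℂ) (x y : ℂ) :
    fcub (actM h r) x y =
      h.det⁻¹ * fcub r (h 0 0 * x + h 1 0 * y) (h 0 1 * x + h 1 1 * y) := by
  rw [actM, act, fcub_smul, fcub_Mmat_mulVec, det_fin_two]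

lemma actM_mul (g h : Matrix (Fin 2) (Fin 2) ℂ) (r : Fin 4 → ℂ) :
    actM (g * h) r = actM g (actM h r) := by
  refine fcub_injective (funext₂ fun x y => ?_)
  simp only [fcub_actM, det_mul, mul_inv, mul_apply, Fin.sum_univ_two]
  ring_nf

lemma actM_one (r : Fin 4 → ℂ) : actM 1 r = r := by
  refine fcub_injective (funext₂ fun x y => ?_)
  simp [fcub_actM]

def glStab (r : Fin 4 → ℂ) : Set (Matrix (Fin 2) (Fin 2) ℂ) :=
  {h | h.det ≠ 0 ∧ actM h r = r}

lemma glStab_eq_image_conj {g : Matrix (Fin 2) (Fin 2) ℂ} (hg : g.det ≠ 0) {r s : Fin 4 → ℂ}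
    (hgs : actM g s = r) : glStab r = (fun m => g * m * g⁻¹) '' glStab s := by
  have hgu : IsUnit g.det := hg.isUnit
  have hsr : actM g⁻¹ r = s := by
    rw [← hgs, ← actM_mul, nonsing_inv_mul g hgu, actM_one]
  ext h
  constructor
  · rintro ⟨hdet, hact⟩
    refine ⟨g⁻¹ * h * g, ⟨by simp [det_mul, hdet, hg], ?_⟩, ?_⟩
    · rw [actM_mul, actM_mul, hgs, hact, hsr]
    · simp [Matrix.mul_assoc, mul_nonsing_inv g hgu, mul_nonsing_inv_cancel_left _ _ hgu]
  · rintro ⟨m, ⟨hdet, hact⟩, rfl⟩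
    refine ⟨by simp [det_mul, hdet, hg], ?_⟩
    rw [actM_mul, actM_mul, hsr, hact, hgs]

lemma glStab_c2 : glStab ![0, 1, 0, 0] = {m | ∃ a : ℂ, a ≠ 0 ∧ m = !![a, 0; 0, 1]} := by
  ext h
  constructor
  · obtain ⟨a, b, c, d, rfl⟩ : ∃ a b c d, h = !![a, b; c, d] := ⟨_, _, _, _, eta_fin_two h⟩
    rintro ⟨hdet, hact⟩
    rw [det_fin_two_of] at hdet
    have e0 : c = 0 ∨ d = 0 := by simpa [actM, act, Mmat, hdet] using congrFun hact 0
    have e1 : (a * d - b * c)⁻¹ * (d * (a * d + 2 * b * c)) = 1 := by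
      simpa [actM, act, Mmat] using congrFun hact 1
    have e3 : a = 0 ∨ b = 0 := by simpa [actM, act, Mmat, hdet] using congrFun hact 3
    have hd : d ≠ 0 := by
      rintro rfl
      simp at e1
    obtain rfl : c = 0 := e0.resolve_right hd
    have ha : a ≠ 0 := by
      rintro rfl
      simp at hdet
    obtain rfl : b = 0 := e3.resolve_left ha
    obtain rfl : d = 1 := by
      field_simp at e1
      exact (mul_left_inj' (mul_ne_zero ha hd)).mp (by linear_combination e1)
    exact ⟨a, ha, rfl⟩
  · rintro ⟨a, ha, rfl⟩
    refine ⟨by simp [det_fin_two, ha], ?_⟩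
    funext i
    fin_cases i <;> simp [actM, act, Mmat, ha]

lemma exists_actM_c2_eq_of_fcub_eq {r : Fin 4 → ℂ} {u u' : ℂ × ℂ} (hind : indepLF u u')
    (hr : ∀ x y : ℂ, fcub r x y = linForm u x y ^ 2 * linForm u' x y) :
    ∃ g : Matrix (Fin 2) (Fin 2) ℂ, g.det ≠ 0 ∧ actM g ![0, 1, 0, 0] = r := by
  set Δ := u.1 * u'.2 - u.2 * u'.1
  -- `g` substitutes `x ↦ u'`, `y ↦ (Δ/3) u`, and `(Δ/3)²` cancels the factor `-3 / det g = 9 / Δ²`.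
  have hdet : !![-u'.2, -(Δ / 3) * u.2; u'.1, Δ / 3 * u.1].det = -(Δ ^ 2 / 3) := by
    rw [det_fin_two_of]
    ring
  have hΔ : Δ ≠ 0 := hind
  refine ⟨_, by rw [hdet]; simpa using hΔ, fcub_injective (funext₂ fun x y => ?_)⟩
  rw [fcub_actM, hr, hdet, fcub_c2]
  simp only [linForm, of_apply, cons_val', cons_val_zero, cons_val_one, empty_val',
    cons_val_fin_one]
  field_simp
  ring

/-- if `f_r = u²·u′` for independent linear forms `u, u′`, the stabilizer of
`r` is conjugate in `GL₂(ℂ)` to `{[[a,0],[0,1]] : a ≠ 0}`; in particular the stabilizer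
of `c₂ = (0,1,0,0)` is exactly this subgroup. -/
theorem stmt5 :
    (∀ r : Fin 4 → ℂ, ∀ u u' : ℂ × ℂ, indepLF u u' →
      (∀ x y : ℂ, fcub r x y = (linForm u x y) ^ 2 * linForm u' x y) →
      ∃ g : Matrix (Fin 2) (Fin 2) ℂ, g.det ≠ 0 ∧
        {h : Matrix (Fin 2) (Fin 2) ℂ | h.det ≠ 0 ∧ actM h r = r} =
          (fun m => g * m * g⁻¹) ''
            {m : Matrix (Fin 2) (Fin 2) ℂ | ∃ a : ℂ, a ≠ 0 ∧ m = !![a, 0; 0, 1]}) ∧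
    {h : Matrix (Fin 2) (Fin 2) ℂ | h.det ≠ 0 ∧ actM h ![0, 1, 0, 0] = ![0, 1, 0, 0]} =
      {m : Matrix (Fin 2) (Fin 2) ℂ | ∃ a : ℂ, a ≠ 0 ∧ m = !![a, 0; 0, 1]} := by
  refine ⟨fun r u u' hind hr => ?_, glStab_c2⟩
  obtain ⟨g, hg, hgr⟩ := exists_actM_c2_eq_of_fcub_eq hind hr
  exact ⟨g, hg, by rw [← glStab_c2]; exact glStab_eq_image_conj hg hgr⟩

end
end

section
/- Let r, s ∈ ℂ⁴ and suppose f_r = u³ for a nonzero linear form u = u₁y−u₂x. Then the moment-map matrix [r,s] = 0 if and only if there exists a linear form ℓ with f_s(x,y) = (u₂y+u₁x)²·ℓ(x,y) for all x, y ∈ ℂ. (Here u₂y+u₁x is the linear form with coefficient vector (u₂,−u₁), perpendicular to u.) -/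
noncomputable section

open Matrix

def cubeCoeffs (u : ℂ × ℂ) : Fin 4 → ℂ :=
  ![u.1 ^ 3, u.1 ^ 2 * u.2, -(u.1 * u.2 ^ 2), u.2 ^ 3]

lemma fcub_cubeCoeffs (u : ℂ × ℂ) (x y : ℂ) : fcub (cubeCoeffs u) x y = linForm u x y ^ 3 := by
  simp only [fcub, cubeCoeffs, linForm, Matrix.cons_val]
  ring

def sqMulCoeffs (u m : ℂ × ℂ) : Fin 4 → ℂ :=
  ![m.1 * u.2 ^ 2, -(2 * u.1 * u.2 * m.1 - u.2 ^ 2 * m.2) / 3,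
    -(u.1 ^ 2 * m.1 - 2 * u.1 * u.2 * m.2) / 3, u.1 ^ 2 * m.2]

lemma fcub_sqMulCoeffs (u m : ℂ × ℂ) (x y : ℂ) :
    fcub (sqMulCoeffs u m) x y = (u.2 * y + u.1 * x) ^ 2 * linForm m x y := by
  simp only [fcub, sqMulCoeffs, linForm, Matrix.cons_val]
  ring

def rootGrad (u : ℂ × ℂ) (s : Fin 4 → ℂ) : Fin 2 → ℂ :=
  ![u.1 ^ 2 * s 0 + 2 * u.1 * u.2 * s 1 - u.2 ^ 2 * s 2,
    -(u.1 ^ 2 * s 1) + 2 * u.1 * u.2 * s 2 - u.2 ^ 2 * s 3]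

lemma momentMap_cubeCoeffs (u : ℂ × ℂ) (s : Fin 4 → ℂ) :
    momentMap (cubeCoeffs u) s = vecMulVec (rootGrad u s) ![u.1, -u.2] := by
  ext i j
  fin_cases i <;> fin_cases j <;>
    simp only [momentMap, cubeCoeffs, rootGrad, vecMulVec_apply, of_apply, cons_val', cons_val_zero,
      cons_val_one, cons_val, cons_val_fin_one, Fin.zero_eta, Fin.mk_one] <;> ring

lemma momentMap_cubeCoeffs_eq_zero_iff {u : ℂ × ℂ} (hu : u ≠ 0) (s : Fin 4 → ℂ) :
    momentMap (cubeCoeffs u) s = 0 ↔ rootGrad u s = 0 := by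
  have hu' : ![u.1, -u.2] ≠ 0 := by
    contrapose! hu
    exact Prod.ext (congrFun hu 0) (neg_eq_zero.mp (congrFun hu 1))
  rw [momentMap_cubeCoeffs, vecMulVec_eq_zero, or_iff_left hu']

lemma rootGrad_sqMulCoeffs (u m : ℂ × ℂ) : rootGrad u (sqMulCoeffs u m) = 0 := by
  ext i
  fin_cases i <;> simp only [rootGrad, sqMulCoeffs, cons_val_zero, cons_val_one, cons_val,
    cons_val_fin_one, Fin.zero_eta, Fin.mk_one, Pi.zero_apply] <;> ring

lemma exists_fcub_eq_sq_mul_of_rootGrad_eq_zero {u : ℂ × ℂ} (hu : u ≠ 0) {s : Fin 4 → ℂ}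
    (hs : rootGrad u s = 0) :
    ∃ m : ℂ × ℂ, ∀ x y : ℂ, fcub s x y = (u.2 * y + u.1 * x) ^ 2 * linForm m x y := by
  have hA : u.1 ^ 2 * s 0 + 2 * u.1 * u.2 * s 1 - u.2 ^ 2 * s 2 = 0 := congrFun hs 0
  have hB : -(u.1 ^ 2 * s 1) + 2 * u.1 * u.2 * s 2 - u.2 ^ 2 * s 3 = 0 := congrFun hs 1
  have hu' : u.1 ≠ 0 ∨ u.2 ≠ 0 := by
    contrapose! hu
    exact Prod.ext hu.1 hu.2
  rcases hu' with h1 | h2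
  · refine ⟨((-3 * u.1 * s 2 + 2 * u.2 * s 3) / u.1 ^ 3, s 3 / u.1 ^ 2), fun x y => ?_⟩
    have key : u.1 ^ 3 * fcub s x y =
        (u.2 * y + u.1 * x) ^ 2 * ((-3 * u.1 * s 2 + 2 * u.2 * s 3) * y - u.1 * s 3 * x) := by
      simp only [fcub]
      linear_combination (u.1 * y ^ 3) * hA + (2 * u.2 * y ^ 3 + 3 * u.1 * x * y ^ 2) * hB
    refine mul_left_cancel₀ (pow_ne_zero 3 h1) ?_
    rw [key, linForm]
    field_simp
  · refine ⟨(s 0 / u.2 ^ 2, (2 * u.1 * s 0 + 3 * u.2 * s 1) / u.2 ^ 3), fun x y => ?_⟩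
    have key : u.2 ^ 3 * fcub s x y =
        (u.2 * y + u.1 * x) ^ 2 * (u.2 * s 0 * y - (2 * u.1 * s 0 + 3 * u.2 * s 1) * x) := by
      simp only [fcub]
      linear_combination (3 * u.2 * y * x ^ 2 + 2 * u.1 * x ^ 3) * hA + u.2 * x ^ 3 * hB
    refine mul_left_cancel₀ (pow_ne_zero 3 h2) ?_
    rw [key, linForm]
    field_simp

lemma exists_fcub_eq_sq_mul_iff {u : ℂ × ℂ} (hu : u ≠ 0) (s : Fin 4 → ℂ) :
    (∃ m : ℂ × ℂ, ∀ x y : ℂ, fcub s x y = (u.2 * y + u.1 * x) ^ 2 * linForm m x y) ↔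
      rootGrad u s = 0 := by
  refine ⟨fun ⟨m, hm⟩ => ?_, exists_fcub_eq_sq_mul_of_rootGrad_eq_zero hu⟩
  obtain rfl : s = sqMulCoeffs u m :=
    fcub_injective (funext₂ fun x y => (hm x y).trans (fcub_sqMulCoeffs u m x y).symm)
  exact rootGrad_sqMulCoeffs u m

/-- if `f_r = u³` for a nonzero linear form `u` then `[r,s] = 0` iff
`(u₂y+u₁x)²` divides `f_s`. -/
theorem stmt14 (r s : Fin 4 → ℂ) (u : ℂ × ℂ) (hu : u ≠ 0)
    (hr : ∀ x y : ℂ, fcub r x y = (linForm u x y) ^ 3) :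
    momentMap r s = 0 ↔
      ∃ m : ℂ × ℂ, ∀ x y : ℂ,
        fcub s x y = (u.2 * y + u.1 * x) ^ 2 * linForm m x y := by
  obtain rfl : r = cubeCoeffs u :=
    fcub_injective (funext₂ fun x y => (hr x y).trans (fcub_cubeCoeffs u x y).symm)
  rw [momentMap_cubeCoeffs_eq_zero_iff hu, exists_fcub_eq_sq_mul_iff hu]

end
end

section
/- Suppose r, s ∈ ℂ⁴ satisfy: f_r = c·u³ for some c ≠ 0 and nonzero linear form u = u₁y−u₂x, and f_s = (u₂y+u₁x)²·ℓ for a linear form ℓ independent from u₂y+u₁x. Then there exists an invertible h ∈ GL₂(ℂ) such that h·(1,0,0,0) = r and h·*(0,0,1,0) = s. (Note f_{(1,0,0,0)} = y³ and f_{(0,0,1,0)} = −3x²y form such a pair; thus the regular part Λ₁^reg of the conormal variety over the orbit C₁ is a single GL₂(ℂ)-orbit.) -/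
noncomputable section

open Matrix

/-! Both actions are linear substitutions of the variables of the cubic form (`fcub_act`,
`fcub_dualAct`), and a cubic form determines its coefficients. So `h = [[a,b],[c',d]]` works as
soon as `(d,-b)` is proportional to `u` and `(a,c')` to `ℓ`, with the two scalars fixed by `c` and
by the normalising powers of the determinant. Solving for them takes a square root `t` of
`-3c / (u₁ℓ₁ + u₂ℓ₂)`, whose denominator is nonzero exactly by the independence hypothesis. -/

theorem eq_of_fcub_eq {r r' : Fin 4 → ℂ} (h : ∀ x y, fcub r x y = fcub r' x y) : r = r' := by
  have h01 := h 0 1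
  have h10 := h 1 0
  have h11 := h 1 1
  have hm := h (-1) 1
  simp only [fcub] at h01 h10 h11 hm
  have h0 : r 0 = r' 0 := by linear_combination h01
  have h1 : r 1 = r' 1 := by linear_combination (hm - h11 + 2 * h10) / 6
  have h2 : r 2 = r' 2 := by linear_combination (-hm - h11 + 2 * h01) / 6
  have h3 : r 3 = r' 3 := by linear_combination -h10
  ext i
  fin_cases i
  exacts [h0, h1, h2, h3]

theorem fcub_act (a b c d : ℂ) (r : Fin 4 → ℂ) (x y : ℂ) :
    fcub (act a b c d r) x y = (a * d - b * c)⁻¹ * fcub r (a * x + c * y) (b * x + d * y) := by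
  simp only [fcub, act, Mmat, neg_mul, cons_mulVec, dotProduct, Fin.sum_univ_four, Fin.isValue,
    cons_val_zero, cons_val_one, cons_val, empty_mulVec, Pi.smul_apply, smul_eq_mul]
  ring

theorem fcub_dualAct (a b c d : ℂ) (s : Fin 4 → ℂ) (x y : ℂ) :
    fcub (dualAct a b c d s) x y =
      ((a * d - b * c) ^ 2)⁻¹ * fcub s (d * x - b * y) (a * y - c * x) := by
  simp only [fcub, dualAct, Mdual, neg_mul, neg_add_rev, cons_mulVec, dotProduct,
    Fin.sum_univ_four, Fin.isValue, cons_val_zero, cons_val_one, cons_val, empty_mulVec,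
    Pi.smul_apply, smul_eq_mul]
  ring

theorem fcub_single_zero (x y : ℂ) : fcub ![1, 0, 0, 0] x y = y ^ 3 := by
  simp [fcub]

theorem fcub_single_two (x y : ℂ) : fcub ![0, 0, 1, 0] x y = -3 * y * x ^ 2 := by
  simp [fcub]

theorem stmt17_general (r s : Fin 4 → ℂ) (c : ℂ) (hc : c ≠ 0) (u ℓ : ℂ × ℂ)
    (hℓ : indepLF (u.2, -u.1) ℓ)
    (hr : ∀ x y : ℂ, fcub r x y = c * (linForm u x y) ^ 3)
    (hs : ∀ x y : ℂ, fcub s x y = (u.2 * y + u.1 * x) ^ 2 * linForm ℓ x y) :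
    ∃ a b c' d : ℂ, a * d - b * c' ≠ 0 ∧
      act a b c' d ![1, 0, 0, 0] = r ∧ dualAct a b c' d ![0, 0, 1, 0] = s := by
  set e := u.1 * ℓ.1 + u.2 * ℓ.2
  have he0 : e ≠ 0 := fun h ↦ hℓ (by linear_combination h)
  obtain ⟨t, ht⟩ := IsAlgClosed.exists_pow_nat_eq (-3 * c / e) two_pos
  have ht2 : t ^ 2 * e = -3 * c := by rw [ht]; field_simp
  have ht0 : t ≠ 0 := by rintro rfl; apply hc; linear_combination ht2 / 3
  have hdet : -3 * ℓ.1 / e ^ 2 * (t * u.1) - (-t * u.2) * (-3 * ℓ.2 / e ^ 2) = -3 * t / e := by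
    field_simp; ring
  refine ⟨-3 * ℓ.1 / e ^ 2, -t * u.2, -3 * ℓ.2 / e ^ 2, t * u.1, ?_, ?_, ?_⟩
  · rw [hdet]; exact div_ne_zero (mul_ne_zero (by norm_num) ht0) he0
  · refine eq_of_fcub_eq fun x y ↦ ?_
    rw [fcub_act, hdet, hr, fcub_single_zero, linForm]
    field_simp
    linear_combination -(u.1 * y - u.2 * x) ^ 3 * ht2
  · refine eq_of_fcub_eq fun x y ↦ ?_
    rw [fcub_dualAct, hdet, hs, fcub_single_two, linForm]
    field_simp
    ring

/-- the regular part of the conormal variety over the orbit `C₁` is a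
single `GL₂(ℂ)`-orbit, with base point `(c₁, c₁^*) = ((1,0,0,0), (0,0,1,0))`. -/
theorem stmt17 (r s : Fin 4 → ℂ) (c : ℂ) (hc : c ≠ 0) (u ℓ : ℂ × ℂ) (hu : u ≠ 0)
    (hℓ : indepLF (u.2, -u.1) ℓ)
    (hr : ∀ x y : ℂ, fcub r x y = c * (linForm u x y) ^ 3)
    (hs : ∀ x y : ℂ, fcub s x y = (u.2 * y + u.1 * x) ^ 2 * linForm ℓ x y) :
    ∃ a b c' d : ℂ, a * d - b * c' ≠ 0 ∧
      act a b c' d ![1, 0, 0, 0] = r ∧ dualAct a b c' d ![0, 0, 1, 0] = s :=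
  stmt17_general r s c hc u ℓ hℓ hr hs
end
end
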